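/- arXiv:2510.24215 — 5 statements merged into one kernel-verified Lean document; each statement's English description precedes it below -/
import Mathlib

section
/- Let A ∈ ℝ^{m×n}, q < m/2 an integer, and S_q^A = {v ∈ ℝ^n : ‖Av‖₀ ≤ 2q}. A function G : ℝ^n → Z (Z an arbitrary type) is (A,q)-robust (i.e., for all x₁, x₂ ∈ ℝ^n and all e₁, e₂ ∈ ℝ^m with ‖e₁‖₀ ≤ q, ‖e₂‖₀ ≤ q, the equality Ax₁ + e₁ = Ax₂ + e₂ implies G(x₁) = G(x₂)) if and only if G(x + v) = G(x) for every x ∈ ℝ^n and every v ∈ S_q^A. -/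
open Matrix Finset

noncomputable section

/-- ℓ₀ "norm": the number of nonzero coordinates. -/
def l0 {m : ℕ} (w : Fin m → ℝ) : ℕ := (Finset.univ.filter fun i => w i ≠ 0).card

lemma l0_le_of_subset {m : ℕ} {w : Fin m → ℝ} {s : Finset (Fin m)}
    (h : ∀ i, w i ≠ 0 → i ∈ s) : l0 w ≤ s.card := by
  apply Finset.card_le_card
  intro i hi
  exact h i (Finset.mem_filter.mp hi).2

theorem stmt1 {m n : ℕ} {Z : Type*} (A : Matrix (Fin m) (Fin n) ℝ) (q : ℕ) (hq : 2 * q < m)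
    (G : (Fin n → ℝ) → Z) :
    (∀ (x₁ x₂ : Fin n → ℝ) (e₁ e₂ : Fin m → ℝ), l0 e₁ ≤ q → l0 e₂ ≤ q →
        A.mulVec x₁ + e₁ = A.mulVec x₂ + e₂ → G x₁ = G x₂) ↔
      (∀ (x v : Fin n → ℝ), l0 (A.mulVec v) ≤ 2 * q → G (x + v) = G x) := by
  constructor
  · intro h x v hv
    set w := A.mulVec v with hw
    set S := (Finset.univ.filter fun i => w i ≠ 0) with hS
    have hScard : S.card ≤ 2 * q := hv
    obtain ⟨T, hTS, hTcard⟩ : ∃ T ⊆ S, T.card = min S.card q :=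
      Finset.exists_subset_card_eq (min_le_left _ _)
    have hT : T.card ≤ q := hTcard ▸ min_le_right _ _
    have hSd : (S \ T).card ≤ q := by
      rw [Finset.card_sdiff_of_subset hTS, hTcard]
      omega
    set e₂ : Fin m → ℝ := fun i => if i ∈ T then w i else 0 with he₂
    set e₁ : Fin m → ℝ := fun i => if i ∈ S \ T then -(w i) else 0 with he₁
    have h1 : l0 e₁ ≤ q := by
      refine le_trans (l0_le_of_subset fun i hi => ?_) hSd
      by_contra hmem
      simp only [he₁, if_neg hmem, ne_eq, not_true_eq_false] at hi
    have h2 : l0 e₂ ≤ q := by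
      refine le_trans (l0_le_of_subset fun i hi => ?_) hT
      by_contra hmem
      simp only [he₂, if_neg hmem, ne_eq, not_true_eq_false] at hi
    refine h (x + v) x e₁ e₂ h1 h2 ?_
    funext i
    simp only [Pi.add_apply, Matrix.mulVec_add, ← hw]
    show (A *ᵥ x) i + w i + e₁ i = (A *ᵥ x) i + e₂ i
    by_cases hiT : i ∈ T
    · have hd : i ∉ S \ T := by simp [hiT]
      rw [show e₁ i = 0 from if_neg hd, show e₂ i = w i from if_pos hiT]
      ring
    · rw [show e₂ i = 0 from if_neg hiT]
      by_cases hiS : i ∈ S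
      · have hd : i ∈ S \ T := Finset.mem_sdiff.mpr ⟨hiS, hiT⟩
        rw [show e₁ i = -w i from if_pos hd]
        ring
      · have hwi : w i = 0 := by
          by_contra hc
          exact hiS (by simp [hS, hc])
        have hd : i ∉ S \ T := fun hc => hiS (Finset.mem_sdiff.mp hc).1
        rw [show e₁ i = 0 from if_neg hd, hwi]
        ring
  · intro h x₁ x₂ e₁ e₂ h1 h2 heq
    have hdiff : A.mulVec (x₁ - x₂) = e₂ - e₁ := by
      rw [Matrix.mulVec_sub]
      have := heq
      funext i
      have hi := congrFun heq i
      simp only [Pi.add_apply] at hi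
      simp only [Pi.sub_apply]
      linarith
    have hl0 : l0 (A.mulVec (x₁ - x₂)) ≤ 2 * q := by
      rw [hdiff]
      calc l0 (e₂ - e₁) ≤ ((Finset.univ.filter fun i => e₂ i ≠ 0) ∪
            (Finset.univ.filter fun i => e₁ i ≠ 0)).card := by
            apply l0_le_of_subset
            intro i hi
            simp only [Finset.mem_union, Finset.mem_filter, Finset.mem_univ, true_and]
            by_contra hc
            push_neg at hc
            simp [Pi.sub_apply, hc.1, hc.2] at hi
        _ ≤ _ + _ := Finset.card_union_le _ _
        _ ≤ 2 * q := by have := h1; have := h2; unfold l0 at *; omega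
    have := h x₂ (x₁ - x₂) hl0
    simpa using this
end
end

section
/- Let A ∈ ℝ^{m×n} and q < m/2 an integer. Then the orthogonal complement of the subspace R = ⋂_{T ⊆ [m], |T| = m−2q} rowspan(A_T) equals the span of the ambiguity set S_q^A = {v : ‖Av‖₀ ≤ 2q}. -/
open Matrix Finset

noncomputable section

/-- The row span of the submatrix `A_T` (rows of `A` indexed by `T`), viewed inside
Euclidean space so that orthogonal complements are available. -/
def rowspanE {m n : ℕ} (A : Matrix (Fin m) (Fin n) ℝ) (T : Finset (Fin m)) :
    Submodule ℝ (EuclideanSpace ℝ (Fin n)) :=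
  Submodule.span ℝ {w : EuclideanSpace ℝ (Fin n) | ∃ i ∈ T, w = A i}

/-!
Since `rowspan(A_T)ᗮ = ker A_T`, a vector lies in some `rowspan(A_T)ᗮ` with `|T| = m - 2q`
exactly when `Av` vanishes on at least `m - 2q` coordinates, i.e. when `‖Av‖₀ ≤ 2q`. Hence the
ambiguity set is the union of these kernels, and its span is their sum. In finite dimension the
orthogonal complement turns the intersection `R` of the row spans into the sum of their
complements, which is therefore the span of the ambiguity set.
-/

section InnerProductSpace

variable {𝕜 E : Type*} [RCLike 𝕜] [NormedAddCommGroup E] [InnerProductSpace 𝕜 E]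

theorem Submodule.mem_orthogonal_span_iff {s : Set E} {v : E} :
    v ∈ (span 𝕜 s)ᗮ ↔ ∀ u ∈ s, inner 𝕜 u v = 0 :=
  ⟨fun hv _ hu => inner_right_of_mem_orthogonal (subset_span hu) hv, fun h =>
    (mem_orthogonal _ _).2 fun _ hu => mem_orthogonal_singleton_iff_inner_left.1 <|
      span_le.2 (fun w hw => mem_orthogonal_singleton_iff_inner_left.2 (h w hw)) hu⟩

theorem Submodule.iInf_orthogonal_sort {ι : Sort*} (K : ι → Submodule 𝕜 E) :
    ⨅ i, (K i)ᗮ = (⨆ i, K i)ᗮ :=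
  (orthogonal_gc 𝕜 E).l_iSup.symm

theorem Submodule.orthogonal_iInf [FiniteDimensional 𝕜 E] {ι : Sort*}
    (K : ι → Submodule 𝕜 E) : (⨅ i, K i)ᗮ = ⨆ i, (K i)ᗮ := by
  rw [← orthogonal_orthogonal (⨆ i, (K i)ᗮ), ← iInf_orthogonal_sort]
  simp_rw [orthogonal_orthogonal]

end InnerProductSpace

theorem l0_add_card_filter_eq_zero {m : ℕ} (w : Fin m → ℝ) :
    l0 w + #{i | w i = 0} = m := by
  rw [l0, add_comm, card_filter_add_card_filter_not, card_univ, Fintype.card_fin]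

theorem l0_le_iff_exists_card_eq {m : ℕ} (k : ℕ) (w : Fin m → ℝ) :
    l0 w ≤ k ↔ ∃ T : Finset (Fin m), #T = m - k ∧ ∀ i ∈ T, w i = 0 := by
  have hsum := l0_add_card_filter_eq_zero w
  constructor
  · intro h
    obtain ⟨T, hT, hcard⟩ := exists_subset_card_eq (s := {i | w i = 0}) (n := m - k) (by omega)
    exact ⟨T, hcard, fun i hi => (mem_filter.1 (hT hi)).2⟩
  · rintro ⟨T, hcard, hT⟩
    have hzero : #T ≤ #{i | w i = 0} :=
      card_le_card fun i hi => mem_filter.2 ⟨mem_univ i, hT i hi⟩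
    omega

theorem inner_toLp_row {m n : ℕ} (A : Matrix (Fin m) (Fin n) ℝ) (v : EuclideanSpace ℝ (Fin n))
    (i : Fin m) : inner ℝ (WithLp.toLp 2 (A i)) v = (A *ᵥ v) i := by
  simp [PiLp.inner_apply, mulVec, dotProduct, mul_comm]

theorem mem_orthogonal_rowspanE_iff {m n : ℕ} (A : Matrix (Fin m) (Fin n) ℝ)
    (T : Finset (Fin m)) (v : EuclideanSpace ℝ (Fin n)) :
    v ∈ (rowspanE A T)ᗮ ↔ ∀ i ∈ T, (A *ᵥ v) i = 0 := by
  simp only [rowspanE, Submodule.mem_orthogonal_span_iff, ← inner_toLp_row]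
  refine ⟨fun h i hi => h _ ⟨i, hi, rfl⟩, ?_⟩
  rintro h u ⟨i, hi, hu⟩
  rw [← WithLp.toLp_ofLp (p := 2) u, hu]
  exact h i hi

theorem setOf_l0_mulVec_le_eq_iUnion {m n : ℕ} (A : Matrix (Fin m) (Fin n) ℝ) (k : ℕ) :
    {v : EuclideanSpace ℝ (Fin n) | l0 (A *ᵥ v) ≤ k} =
      ⋃ T ∈ {T : Finset (Fin m) | #T = m - k}, ((rowspanE A T)ᗮ : Set _) := by
  ext v
  simp [l0_le_iff_exists_card_eq, mem_orthogonal_rowspanE_iff]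

theorem stmt5_general {m n : ℕ} (A : Matrix (Fin m) (Fin n) ℝ) (q : ℕ) :
    (⨅ T ∈ {T : Finset (Fin m) | T.card = m - 2 * q}, rowspanE A T)ᗮ =
      Submodule.span ℝ {v : EuclideanSpace ℝ (Fin n) | l0 (A.mulVec v) ≤ 2 * q} := by
  rw [setOf_l0_mulVec_le_eq_iUnion, Submodule.span_iUnion₂]
  simp_rw [Submodule.span_eq, Submodule.orthogonal_iInf]

theorem stmt5 {m n : ℕ} (A : Matrix (Fin m) (Fin n) ℝ) (q : ℕ) (hq : 2 * q < m) :
    (⨅ T ∈ {T : Finset (Fin m) | T.card = m - 2 * q}, rowspanE A T)ᗮ =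
      Submodule.span ℝ {v : EuclideanSpace ℝ (Fin n) | l0 (A.mulVec v) ≤ 2 * q} :=
  stmt5_general A q
end
end

section
/- Let A ∈ ℝ^{m×n}, q < m/2, let R = ⋂_{T ⊆ [m], |T| = m−2q} rowspan(A_T), and let U be the orthogonal projection onto R. Then the map x ↦ Ux is (A,q)-robust: whenever Ax₁ + e₁ = Ax₂ + e₂ with ‖e₁‖₀, ‖e₂‖₀ ≤ q, it holds that Ux₁ = Ux₂. -/
open Matrix Finset

noncomputable section

/-- The range (column space) of a square matrix, viewed inside Euclidean space. -/
def rangeE {n : ℕ} (M : Matrix (Fin n) (Fin n) ℝ) : Submodule ℝ (EuclideanSpace ℝ (Fin n)) where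
  carrier := {x | ∃ v : EuclideanSpace ℝ (Fin n), M.mulVec v = x}
  zero_mem' := ⟨0, Matrix.mulVec_zero M⟩
  add_mem' := by
    rintro a b ⟨va, ha⟩ ⟨vb, hb⟩
    exact ⟨va + vb, by simp [Matrix.mulVec_add, ha, hb]⟩
  smul_mem' := by
    rintro c a ⟨v, hv⟩
    exact ⟨c • v, by simp [Matrix.mulVec_smul, hv]⟩

/-! With `d = x₁ - x₂`, the vector `A d = e₂ - e₁` has at most `2q` nonzero entries, so `d` is
orthogonal to the rows of `A` indexed by some `T` with `|T| = m - 2q`. The range of `U` lies in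
`rowspan(A_T)`, hence `Ud ⊥ d`; for a symmetric idempotent `U` this reads `‖Ud‖² = ⟪Ud, d⟫ = 0`. -/

lemma l0_sub_le {m : ℕ} (v w : Fin m → ℝ) : l0 (v - w) ≤ l0 v + l0 w := by
  calc l0 (v - w) ≤ #(univ.filter (v · ≠ 0) ∪ univ.filter (w · ≠ 0)) := by
        refine card_le_card fun i hi => ?_
        simp only [mem_filter, mem_univ, true_and, mem_union, Pi.sub_apply] at hi ⊢
        contrapose! hi
        simp [hi.1, hi.2]
    _ ≤ l0 v + l0 w := card_union_le _ _

lemma exists_card_eq_forall_eq_zero {m k : ℕ} {v : Fin m → ℝ} (hv : l0 v ≤ k) :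
    ∃ T : Finset (Fin m), #T = m - k ∧ ∀ i ∈ T, v i = 0 := by
  have hcard : m - k ≤ #(univ.filter (v · ≠ 0))ᶜ := by
    rw [card_compl, Fintype.card_fin]
    exact Nat.sub_le_sub_left hv m
  obtain ⟨T, hTsub, hTcard⟩ := exists_subset_card_eq hcard
  exact ⟨T, hTcard, fun i hi => by simpa using hTsub hi⟩

lemma rowspanE_le_orthogonal {m n : ℕ} {A : Matrix (Fin m) (Fin n) ℝ} {T : Finset (Fin m)}
    {d : Fin n → ℝ} (hd : ∀ i ∈ T, (A *ᵥ d) i = 0) :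
    rowspanE A T ≤ (ℝ ∙ WithLp.toLp 2 d)ᗮ := by
  refine Submodule.span_le.mpr ?_
  rintro w ⟨i, hi, hwi⟩
  rw [SetLike.mem_coe, Submodule.mem_orthogonal_singleton_iff_inner_right,
    EuclideanSpace.inner_eq_star_dotProduct, hwi, star_trivial]
  exact hd i hi

lemma mulVec_eq_zero_of_dotProduct_mulVec_eq_zero {n : ℕ} {U : Matrix (Fin n) (Fin n) ℝ}
    (hUsymm : U.IsSymm) (hUidem : U * U = U) {v : Fin n → ℝ} (hv : v ⬝ᵥ U *ᵥ v = 0) :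
    U *ᵥ v = 0 := by
  rw [← dotProduct_self_eq_zero, dotProduct_mulVec, ← mulVec_transpose, hUsymm.eq,
    mulVec_mulVec, hUidem, ← hv, dotProduct_comm]

theorem stmt7_general {m n : ℕ} (A : Matrix (Fin m) (Fin n) ℝ) (q : ℕ)
    (U : Matrix (Fin n) (Fin n) ℝ) (hUsymm : U.IsSymm) (hUidem : U * U = U)
    (hUrange : rangeE U = ⨅ T ∈ {T : Finset (Fin m) | T.card = m - 2 * q}, rowspanE A T)
    (x₁ x₂ : Fin n → ℝ) (e₁ e₂ : Fin m → ℝ) (he₁ : l0 e₁ ≤ q) (he₂ : l0 e₂ ≤ q)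
    (h : A.mulVec x₁ + e₁ = A.mulVec x₂ + e₂) :
    U.mulVec x₁ = U.mulVec x₂ := by
  set d := x₁ - x₂
  have hAd : A *ᵥ d = e₂ - e₁ := by
    rw [mulVec_sub, sub_eq_sub_iff_add_eq_add, h, add_comm]
  have hsparse : l0 (A *ᵥ d) ≤ 2 * q := by
    rw [hAd, two_mul]
    exact (l0_sub_le e₂ e₁).trans (add_le_add he₂ he₁)
  obtain ⟨T, hTcard, hT⟩ := exists_card_eq_forall_eq_zero hsparse
  have hUd : WithLp.toLp 2 (U *ᵥ d) ∈ rowspanE A T := by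
    have : WithLp.toLp 2 (U *ᵥ d) ∈ rangeE U := ⟨WithLp.toLp 2 d, rfl⟩
    rw [hUrange] at this
    simp only [Submodule.mem_iInf] at this
    exact this T hTcard
  have horth := rowspanE_le_orthogonal hT hUd
  rw [Submodule.mem_orthogonal_singleton_iff_inner_right,
    EuclideanSpace.inner_eq_star_dotProduct, star_trivial, dotProduct_comm] at horth
  rw [← sub_eq_zero, ← mulVec_sub]
  exact mulVec_eq_zero_of_dotProduct_mulVec_eq_zero hUsymm hUidem horth

theorem stmt7 {m n : ℕ} (A : Matrix (Fin m) (Fin n) ℝ) (q : ℕ) (hq : 2 * q < m)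
    (U : Matrix (Fin n) (Fin n) ℝ) (hUsymm : U.IsSymm) (hUidem : U * U = U)
    (hUrange : rangeE U = ⨅ T ∈ {T : Finset (Fin m) | T.card = m - 2 * q}, rowspanE A T)
    (x₁ x₂ : Fin n → ℝ) (e₁ e₂ : Fin m → ℝ) (he₁ : l0 e₁ ≤ q) (he₂ : l0 e₂ ≤ q)
    (h : A.mulVec x₁ + e₁ = A.mulVec x₂ + e₂) :
    U.mulVec x₁ = U.mulVec x₂ :=
  stmt7_general A q U hUsymm hUidem hUrange x₁ x₂ e₁ e₂ he₁ he₂ h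
end
end

section
/- Let A ∈ ℝ^{m×n}, q < m/2, U the orthogonal projection onto R = ⋂_{T ⊆ [m], |T| = m−2q} rowspan(A_T). Suppose y = Ax* + e with ‖e‖₀ ≤ q. Then every minimizer x̂ of the map x ↦ ‖y − Ax‖₀ over ℝ^n satisfies U x̂ = U x*. -/
/-! Both `x*` and `x̂` leave residuals with at most `q` nonzero entries, so `A (x̂ - x*)` vanishes
on some set `T` of `m - 2q` rows. Then `U (x̂ - x*)` lies in `rowspan(A_T)`, hence is orthogonal to
`x̂ - x*`; for an orthogonal projector this forces `U (x̂ - x*) = 0`. -/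

open Matrix Finset

noncomputable section

lemma exists_card_eq_forall_eq_zero_of_l0_le {m k : ℕ} {w : Fin m → ℝ} (hw : l0 w ≤ k) :
    ∃ T : Finset (Fin m), T.card = m - k ∧ ∀ i ∈ T, w i = 0 := by
  have hsplit := card_filter_add_card_filter_not (s := univ) (fun i => w i = 0)
  rw [card_univ, Fintype.card_fin] at hsplit
  obtain ⟨T, hTsub, hTcard⟩ :=
    exists_subset_card_eq (s := univ.filter fun i => w i = 0) (n := m - k)
      (by simp only [l0, ne_eq] at hw; omega)
  exact ⟨T, hTcard, fun i hi => (mem_filter.mp (hTsub hi)).2⟩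

lemma dotProduct_eq_zero_of_mem_rowspanE {m n : ℕ} {A : Matrix (Fin m) (Fin n) ℝ}
    {T : Finset (Fin m)} {d : Fin n → ℝ} (hT : ∀ i ∈ T, A i ⬝ᵥ d = 0)
    {w : EuclideanSpace ℝ (Fin n)} (hw : w ∈ rowspanE A T) : (w : Fin n → ℝ) ⬝ᵥ d = 0 := by
  induction hw using Submodule.span_induction with
  | mem w hw =>
    obtain ⟨i, hi, hwi⟩ := hw
    rw [hwi]
    exact hT i hi
  | zero => exact zero_dotProduct d
  | add a b _ _ ha hb => rw [WithLp.ofLp_add, add_dotProduct, ha, hb, add_zero]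
  | smul c a _ ha => rw [WithLp.ofLp_smul, smul_dotProduct, ha, smul_zero]

lemma mulVec_mem_rangeE {n : ℕ} (U : Matrix (Fin n) (Fin n) ℝ) (d : Fin n → ℝ) :
    WithLp.toLp 2 (U *ᵥ d) ∈ rangeE U :=
  ⟨WithLp.toLp 2 d, rfl⟩

/-- For an orthogonal projector, `⟪U d, d⟫ = ‖U d‖²`. -/
lemma Matrix.mulVec_eq_zero_of_mulVec_dotProduct_eq_zero {ι : Type*} [Fintype ι]
    {U : Matrix ι ι ℝ} (hUsymm : U.IsSymm) (hUidem : U * U = U) {d : ι → ℝ}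
    (hd : (U *ᵥ d) ⬝ᵥ d = 0) : U *ᵥ d = 0 := by
  refine dotProduct_self_eq_zero.mp ?_
  calc (U *ᵥ d) ⬝ᵥ (U *ᵥ d) = (U *ᵥ d) ᵥ* U ⬝ᵥ d := dotProduct_mulVec _ _ _
    _ = U *ᵥ (U *ᵥ d) ⬝ᵥ d := by rw [← mulVec_transpose, hUsymm]
    _ = 0 := by rw [mulVec_mulVec, hUidem, hd]

theorem stmt10_general {m n : ℕ} (A : Matrix (Fin m) (Fin n) ℝ) (q : ℕ)
    (U : Matrix (Fin n) (Fin n) ℝ) (hUsymm : U.IsSymm) (hUidem : U * U = U)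
    (hUrange : rangeE U = ⨅ T ∈ {T : Finset (Fin m) | T.card = m - 2 * q}, rowspanE A T)
    (xs : Fin n → ℝ) (e : Fin m → ℝ) (he : l0 e ≤ q) (y : Fin m → ℝ)
    (hy : y = A.mulVec xs + e) (xhat : Fin n → ℝ)
    (hmin : ∀ x : Fin n → ℝ, l0 (y - A.mulVec xhat) ≤ l0 (y - A.mulVec x)) :
    U.mulVec xhat = U.mulVec xs := by
  have hres : y - A *ᵥ xs = e := by rw [hy]; abel
  have hdiff : A *ᵥ (xhat - xs) = (y - A *ᵥ xs) - (y - A *ᵥ xhat) := by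
    rw [mulVec_sub]; abel
  have hsparse : l0 (A *ᵥ (xhat - xs)) ≤ 2 * q := by
    have := hres ▸ hmin xs
    rw [hdiff, hres]
    have := l0_sub_le e (y - A *ᵥ xhat)
    omega
  obtain ⟨T, hTcard, hT⟩ := exists_card_eq_forall_eq_zero_of_l0_le hsparse
  have hmem : WithLp.toLp 2 (U *ᵥ (xhat - xs)) ∈ rowspanE A T := by
    have h := mulVec_mem_rangeE U (xhat - xs)
    rw [hUrange] at h
    simp only [Submodule.mem_iInf] at h
    exact h T hTcard
  have hUd := mulVec_eq_zero_of_mulVec_dotProduct_eq_zero hUsymm hUidem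
    (dotProduct_eq_zero_of_mem_rowspanE hT hmem)
  rwa [mulVec_sub, sub_eq_zero] at hUd

theorem stmt10 {m n : ℕ} (A : Matrix (Fin m) (Fin n) ℝ) (q : ℕ) (hq : 2 * q < m)
    (U : Matrix (Fin n) (Fin n) ℝ) (hUsymm : U.IsSymm) (hUidem : U * U = U)
    (hUrange : rangeE U = ⨅ T ∈ {T : Finset (Fin m) | T.card = m - 2 * q}, rowspanE A T)
    (xs : Fin n → ℝ) (e : Fin m → ℝ) (he : l0 e ≤ q) (y : Fin m → ℝ)
    (hy : y = A.mulVec xs + e) (xhat : Fin n → ℝ)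
    (hmin : ∀ x : Fin n → ℝ, l0 (y - A.mulVec xhat) ≤ l0 (y - A.mulVec x)) :
    U.mulVec xhat = U.mulVec xs :=
  stmt10_general A q U hUsymm hUidem hUrange xs e he y hy xhat hmin
end
end

section
/- Let A ∈ ℝ^{m×n}, q < m/2, and suppose for every T ⊆ [m] with |T| = m − 2q the submatrix A_T has rank n (full column rank). Then the robust subspace R = ⋂_{|T|=m−2q} rowspan(A_T) equals ℝ^n, the robust projector U is the identity, and every minimizer of x ↦ ‖y − Ax‖₀ with y = Ax* + e, ‖e‖₀ ≤ q, equals x* exactly. -/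
/-!
Every set of `m - 2q` rows of `A` has trivial kernel. Hence the rows indexed by any such set span
`ℝⁿ`, so the robust subspace is everything, and an idempotent whose range is everything is the
identity. For recovery, two codewords `A x`, `A x'` at Hamming distance at most `2q` agree on at
least `m - 2q` rows, which forces `x = x'`; a minimizer `x̂` satisfies
`‖y - A x̂‖₀ ≤ ‖y - A x*‖₀ = ‖e‖₀ ≤ q`, so `A x̂` and `A x*` are within distance `2q`.
-/

open Matrix Finset

noncomputable section

namespace Matrix

variable {ι κ K : Type*} [Fintype κ] [Field K]

def FullColumnRankOn (A : Matrix ι κ K) (T : Finset ι) : Prop :=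
  (A.submatrix (fun i : T => (i : ι)) id).rank = Fintype.card κ

theorem ker_mulVecLin_eq_bot_of_rank_eq_card [Fintype ι] {M : Matrix ι κ K}
    (h : M.rank = Fintype.card κ) : LinearMap.ker M.mulVecLin = ⊥ := by
  have hsum := M.mulVecLin.finrank_range_add_finrank_ker
  rw [← rank, h, Module.finrank_fintype_fun_eq_card] at hsum
  exact Submodule.finrank_eq_zero.mp (by omega)

theorem FullColumnRankOn.eq_zero_of_mulVec_eq_zero_on {A : Matrix ι κ K} {T : Finset ι}
    (hT : A.FullColumnRankOn T) {v : κ → K} (hv : ∀ i ∈ T, (A *ᵥ v) i = 0) : v = 0 :=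
  LinearMap.ker_eq_bot'.mp (ker_mulVecLin_eq_bot_of_rank_eq_card hT) v (funext fun i => hv i i.2)

theorem eq_of_hammingDist_mulVec_le [Fintype ι] [DecidableEq ι] [DecidableEq K]
    {A : Matrix ι κ K} {s : ℕ}
    (hA : ∀ T : Finset ι, #T = Fintype.card ι - s → A.FullColumnRankOn T) {u v : κ → K}
    (huv : hammingDist (A *ᵥ u) (A *ᵥ v) ≤ s) : u = v := by
  have hagree : Fintype.card ι - s ≤ #{i | (A *ᵥ u) i = (A *ᵥ v) i} := by
    have := card_filter_add_card_filter_not (s := univ) fun i => (A *ᵥ u) i = (A *ᵥ v) i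
    rw [card_univ] at this
    simp only [hammingDist, ne_eq] at huv
    omega
  obtain ⟨T, hTagree, hTcard⟩ := exists_subset_card_eq hagree
  refine sub_eq_zero.mp ((hA T hTcard).eq_zero_of_mulVec_eq_zero_on fun i hi => ?_)
  rw [mulVec_sub, Pi.sub_apply, sub_eq_zero]
  exact (mem_filter.mp (hTagree hi)).2

theorem eq_one_of_mul_self_eq_of_surjective_mulVec [DecidableEq κ] {U : Matrix κ κ K}
    (hU : U * U = U) (hsurj : Function.Surjective U.mulVec) : U = 1 :=
  ext_iff_mulVec.mpr fun v => by
    obtain ⟨w, rfl⟩ := hsurj v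
    rw [one_mulVec, mulVec_mulVec, hU]

end Matrix

theorem l0_sub {m : ℕ} (u v : Fin m → ℝ) : l0 (u - v) = hammingDist u v := by
  simp only [l0, hammingDist, Pi.sub_apply, sub_ne_zero]

theorem rowspanE_eq_top {m n : ℕ} {A : Matrix (Fin m) (Fin n) ℝ} {T : Finset (Fin m)}
    (hT : A.FullColumnRankOn T) : rowspanE A T = ⊤ := by
  -- a vector orthogonal to the rows of `A_T` lies in the kernel of `A_T`
  refine Submodule.orthogonal_eq_bot_iff.mp (Submodule.eq_bot_iff _ |>.mpr fun x hx => ?_)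
  have hrows : ∀ i ∈ T, (A *ᵥ x) i = 0 := fun i hi => by
    have := hx (WithLp.toLp 2 (A i)) (Submodule.subset_span ⟨i, hi, rfl⟩)
    simpa [PiLp.inner_apply, mulVec, dotProduct, mul_comm] using this
  simpa using (hT.eq_zero_of_mulVec_eq_zero_on hrows : (x : Fin n → ℝ) = 0)

theorem mulVec_surjective_of_rangeE_eq_top {n : ℕ} {U : Matrix (Fin n) (Fin n) ℝ}
    (hU : rangeE U = ⊤) : Function.Surjective U.mulVec := fun x => by
  obtain ⟨v, hv⟩ : WithLp.toLp 2 x ∈ rangeE U := hU ▸ Submodule.mem_top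
  exact ⟨v, hv⟩

theorem stmt17_general {m n : ℕ} (A : Matrix (Fin m) (Fin n) ℝ) (q : ℕ)
    (hrank : ∀ T : Finset (Fin m), T.card = m - 2 * q →
      (A.submatrix (fun i : T => (i : Fin m)) id).rank = n) :
    (⨅ T ∈ {T : Finset (Fin m) | T.card = m - 2 * q}, rowspanE A T) = ⊤ ∧
      (∀ U : Matrix (Fin n) (Fin n) ℝ, U.IsSymm → U * U = U →
        rangeE U = (⨅ T ∈ {T : Finset (Fin m) | T.card = m - 2 * q}, rowspanE A T) → U = 1) ∧
      ∀ (xs : Fin n → ℝ) (e : Fin m → ℝ) (y : Fin m → ℝ) (xhat : Fin n → ℝ),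
        l0 e ≤ q → y = A.mulVec xs + e →
        (∀ x : Fin n → ℝ, l0 (y - A.mulVec xhat) ≤ l0 (y - A.mulVec x)) →
        xhat = xs := by
  have hfull : ∀ T : Finset (Fin m), #T = Fintype.card (Fin m) - 2 * q → A.FullColumnRankOn T :=
    fun T hT => by simpa [FullColumnRankOn] using hrank T (by simpa using hT)
  have hR : (⨅ T ∈ {T : Finset (Fin m) | T.card = m - 2 * q}, rowspanE A T) = ⊤ :=
    iInf₂_eq_top.mpr fun T hT => rowspanE_eq_top (hfull T (by simpa using hT))
  refine ⟨hR, fun U _ hU hUR => ?_, fun xs e y xhat he hy hmin => ?_⟩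
  · exact eq_one_of_mul_self_eq_of_surjective_mulVec hU
      (mulVec_surjective_of_rangeE_eq_top (hUR.trans hR))
  · have hxs : l0 (y - A *ᵥ xs) ≤ q := by rwa [hy, add_sub_cancel_left]
    have hxhat := (hmin xs).trans hxs
    rw [l0_sub] at hxs hxhat
    refine eq_of_hammingDist_mulVec_le hfull ?_
    calc hammingDist (A *ᵥ xhat) (A *ᵥ xs)
        ≤ hammingDist (A *ᵥ xhat) y + hammingDist y (A *ᵥ xs) := hammingDist_triangle _ _ _
      _ ≤ 2 * q := by rw [hammingDist_comm]; omega

theorem stmt17 {m n : ℕ} (A : Matrix (Fin m) (Fin n) ℝ) (q : ℕ) (hq : 2 * q < m)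
    (hrank : ∀ T : Finset (Fin m), T.card = m - 2 * q →
      (A.submatrix (fun i : T => (i : Fin m)) id).rank = n) :
    (⨅ T ∈ {T : Finset (Fin m) | T.card = m - 2 * q}, rowspanE A T) = ⊤ ∧
      (∀ U : Matrix (Fin n) (Fin n) ℝ, U.IsSymm → U * U = U →
        rangeE U = (⨅ T ∈ {T : Finset (Fin m) | T.card = m - 2 * q}, rowspanE A T) → U = 1) ∧
      ∀ (xs : Fin n → ℝ) (e : Fin m → ℝ) (y : Fin m → ℝ) (xhat : Fin n → ℝ),
        l0 e ≤ q → y = A.mulVec xs + e →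
        (∀ x : Fin n → ℝ, l0 (y - A.mulVec xhat) ≤ l0 (y - A.mulVec x)) →
        xhat = xs :=
  stmt17_general A q hrank
end
end
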